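/- For any set 𝒯 of MUL-trees with label sets contained in a finite species set X and any integer k, there exists a phylogenetic network on X with k reticulation nodes that weakly displays every MUL-tree in 𝒯 if and only if there exists a beaded tree on X with k reticulation nodes that weakly displays every MUL-tree in 𝒯. -/

import Mathlib

/-!
Common formal framework for MUL-trees, phylogenetic networks, beaded trees,
duplication trees, weak embeddings and related operations, following
van Iersel, Janssen, Jones, Murakami, Zeh,
"Polynomial-Time Algorithms for Phylogenetic Inference Problems involving
duplication and reticulation".

All graphs are directed multigraphs on natural-number vertices, given by a
finite vertex set, an edge-multiplicity function and a (partial) leaf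
labelling by species (also natural numbers).
-/

open scoped Classical

structure DG where
  verts : Finset ℕ
  mult : ℕ → ℕ → ℕ
  label : ℕ → Option ℕ

namespace DG

/-- An arc is a pair of endpoints together with the index of the parallel copy. -/
abbrev Arc := ℕ × ℕ × ℕ

def Adj (G : DG) (u v : ℕ) : Prop := 0 < G.mult u v

def outDeg (G : DG) (u : ℕ) : ℕ := ∑ v ∈ G.verts, G.mult u v
def inDeg (G : DG) (v : ℕ) : ℕ := ∑ u ∈ G.verts, G.mult u v

/-- `G.Reaches u v` : `u` is an ancestor of `v` (possibly `u = v`). -/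
def Reaches (G : DG) : ℕ → ℕ → Prop := Relation.ReflTransGen G.Adj
/-- `G.SReaches u v` : `u` is a strict ancestor of `v` (in an acyclic graph). -/
def SReaches (G : DG) : ℕ → ℕ → Prop := Relation.TransGen G.Adj
def Acyclic (G : DG) : Prop := ∀ v, ¬ G.SReaches v v

def IsRoot (G : DG) (v : ℕ) : Prop := v ∈ G.verts ∧ G.inDeg v = 0 ∧ G.outDeg v = 1
def IsLeafNode (G : DG) (v : ℕ) : Prop := v ∈ G.verts ∧ G.inDeg v = 1 ∧ G.outDeg v = 0
def IsTreeNode (G : DG) (v : ℕ) : Prop := v ∈ G.verts ∧ G.inDeg v = 1 ∧ G.outDeg v = 2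
def IsRetic (G : DG) (v : ℕ) : Prop := v ∈ G.verts ∧ G.inDeg v = 2 ∧ G.outDeg v = 1
def IsDupNode (G : DG) (v : ℕ) : Prop := v ∈ G.verts ∧ G.inDeg v = 1 ∧ G.outDeg v = 1

/-- The reticulation number: the number of reticulation nodes. -/
def reticNum (G : DG) : ℕ := (G.verts.filter (fun v => G.inDeg v = 2 ∧ G.outDeg v = 1)).card
/-- The duplication number: the number of duplication nodes. -/
def dupNum (G : DG) : ℕ := (G.verts.filter (fun v => G.inDeg v = 1 ∧ G.outDeg v = 1)).card
/-- The number of beads (counted by their bottom nodes). -/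
noncomputable def beadNum (G : DG) : ℕ :=
  (G.verts.filter (fun v => ∃ u ∈ G.verts, G.mult u v = 2)).card

def Supported (G : DG) : Prop := ∀ u v, G.Adj u v → u ∈ G.verts ∧ v ∈ G.verts
/-- Exactly the leaves carry labels. -/
def LabelsOnLeaves (G : DG) : Prop := ∀ v, (∃ x, G.label v = some x) ↔ G.IsLeafNode v

/-- The number of leaves (= labelled nodes). -/
def numLeaves (G : DG) : ℕ := (G.verts.filter (fun v => (G.label v).isSome)).card

/-- A multi-labelled tree (MUL-tree) with labels contained in `X`. -/
structure IsMulTree (X : Finset ℕ) (G : DG) : Prop where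
  root : ∃! r, G.IsRoot r
  nodes : ∀ v ∈ G.verts, G.IsRoot v ∨ G.IsTreeNode v ∨ G.IsLeafNode v
  acyclic : G.Acyclic
  simple : ∀ u v, G.mult u v ≤ 1
  supported : G.Supported
  labels : G.LabelsOnLeaves
  labelsSub : ∀ v x, G.label v = some x → x ∈ X

/-- A rooted binary phylogenetic network on `X` (parallel edges allowed). -/
structure IsNetwork (X : Finset ℕ) (G : DG) : Prop where
  root : ∃! r, G.IsRoot r
  nodes : ∀ v ∈ G.verts, G.IsRoot v ∨ G.IsTreeNode v ∨ G.IsRetic v ∨ G.IsLeafNode v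
  acyclic : G.Acyclic
  supported : G.Supported
  labels : G.LabelsOnLeaves
  labelsSub : ∀ v x, G.label v = some x → x ∈ X
  labelsOnto : ∀ x ∈ X, ∃! v, G.label v = some x

/-- A duplication tree on `X`. -/
structure IsDupTree (X : Finset ℕ) (G : DG) : Prop where
  root : ∃! r, G.IsRoot r
  nodes : ∀ v ∈ G.verts, G.IsRoot v ∨ G.IsTreeNode v ∨ G.IsDupNode v ∨ G.IsLeafNode v
  acyclic : G.Acyclic
  simple : ∀ u v, G.mult u v ≤ 1
  supported : G.Supported
  labels : G.LabelsOnLeaves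
  labelsSub : ∀ v x, G.label v = some x → x ∈ X
  labelsOnto : ∀ x ∈ X, ∃! v, G.label v = some x

/-- A beaded tree: a phylogenetic network in which every reticulation node is
the bottom node of a bead (a pair of parallel edges). -/
def IsBeadedTree (X : Finset ℕ) (G : DG) : Prop :=
  IsNetwork X G ∧ ∀ v ∈ G.verts, G.inDeg v = 2 → ∃ u, G.mult u v = 2

def ArcOK (G : DG) (e : Arc) : Prop := e.2.2 < G.mult e.1 e.2.1

/-- `G.IsWalk p a b` : `p` is a (nonempty) directed path of arcs from `a` to `b`. -/
def IsWalk (G : DG) (p : List Arc) (a b : ℕ) : Prop :=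
  p ≠ [] ∧ (∀ e ∈ p, G.ArcOK e) ∧
  List.Chain' (fun e f : Arc => e.2.1 = f.1) p ∧
  p.head?.map Prod.fst = some a ∧
  p.getLast?.map (fun e => e.2.1) = some b

/-- `v` is a node visited by the walk `p`. -/
def OnWalk (p : List Arc) (v : ℕ) : Prop := ∃ e ∈ p, e.1 = v ∨ e.2.1 = v

/-- A weak embedding of a MUL-tree `T` into a network `N`: nodes map to nodes,
edges map to directed paths and the two paths out of an internal node start
with different out-edges. -/
def WeakEmbedding (T N : DG) (h : ℕ → ℕ) (hE : ℕ → ℕ → List Arc) : Prop :=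
  (∀ v ∈ T.verts, h v ∈ N.verts) ∧
  (∀ v, T.IsLeafNode v → N.IsLeafNode (h v) ∧ N.label (h v) = T.label v) ∧
  (∀ u v, T.Adj u v → N.IsWalk (hE u v) (h u) (h v)) ∧
  (∀ x y y', T.Adj x y → T.Adj x y' → y ≠ y' → (hE x y).head? ≠ (hE x y').head?)

/-- `N.Displays T` : `N` weakly displays `T`. -/
def Displays (N T : DG) : Prop := ∃ h hE, WeakEmbedding T N h hE

/-- `x` is a least common ancestor of `y` and `z`. -/
def IsLCA (G : DG) (x y z : ℕ) : Prop :=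
  G.Reaches x y ∧ G.Reaches x z ∧
  ∀ w, G.SReaches x w → ¬ (G.Reaches w y ∧ G.Reaches w z)

/-- A duplication mapping from a MUL-tree `T` to a duplication tree `D`. -/
def DupMapping (T D : DG) (M : ℕ → ℕ) : Prop :=
  (∀ v, T.IsLeafNode v → D.IsLeafNode (M v) ∧ D.label (M v) = T.label v) ∧
  (∀ u v, T.Adj u v → D.SReaches (M u) (M v)) ∧
  (∀ u v v', T.Adj u v → T.Adj u v' → v ≠ v' →
    D.IsLCA (M u) (M v) (M v') ∨ D.IsDupNode (M u))

/-- `D.ConsistentWith T` : there is a duplication mapping from `T` to `D`. -/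
def ConsistentWith (D T : DG) : Prop := ∃ M, DupMapping T D M

/-- A solution to Beaded Tree on `𝒯`: a beaded tree on `X` weakly displaying
every MUL-tree of `𝒯`. -/
def Solution (X : Finset ℕ) (Ts : Set DG) (B : DG) : Prop :=
  IsBeadedTree X B ∧ ∀ T ∈ Ts, B.Displays T

/-- An optimal solution: minimum reticulation number among all solutions. -/
def OptSolution (X : Finset ℕ) (Ts : Set DG) (B : DG) : Prop :=
  Solution X Ts B ∧ ∀ B', Solution X Ts B' → B.reticNum ≤ B'.reticNum

/-- Number of beads traversed by a walk. -/
def beadsOnWalk (G : DG) (p : List Arc) : ℕ :=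
  p.countP (fun e => decide (G.mult e.1 e.2.1 = 2))

/-- Number of duplication nodes traversed by a walk (as arc sources). -/
def dupsOnWalk (G : DG) (p : List Arc) : ℕ :=
  p.countP (fun e => decide (G.inDeg e.1 = 1 ∧ G.outDeg e.1 = 1))

/-- The bead depth: the maximum number of beads on any directed path. -/
noncomputable def beadDepth (G : DG) : ℕ :=
  sSup {n | ∃ p a b, G.IsWalk p a b ∧ G.beadsOnWalk p = n}

/-- A solution to Beaded Tree Depth of minimum bead depth. -/
def DepthOptSolution (X : Finset ℕ) (Ts : Set DG) (B : DG) : Prop :=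
  Solution X Ts B ∧ ∀ B', Solution X Ts B' → B.beadDepth ≤ B'.beadDepth

/-- The child of the root is the top node of a bead. -/
def HasBeadAtRoot (G : DG) : Prop :=
  ∃ r u v, G.IsRoot r ∧ G.Adj r u ∧ G.mult u v = 2

/-- `B` is obtained from `B'` by inserting a new bead `(u,v)` between the root
`r` of `B'` and its child `a`.  Equivalently, `B'` is obtained from `B` by
deleting `u` and `v` and adding an edge from the root to the child of `v`. -/
def AddBeadAtRoot (B' B : DG) : Prop :=
  ∃ r a u v, B'.IsRoot r ∧ B'.Adj r a ∧ u ∉ B'.verts ∧ v ∉ B'.verts ∧ u ≠ v ∧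
    B.verts = insert u (insert v B'.verts) ∧
    B.label = (fun w => if w = u ∨ w = v then none else B'.label w) ∧
    B.mult = (fun s t =>
      if s = r ∧ t = a then 0
      else if s = r ∧ t = u then 1
      else if s = u ∧ t = v then 2
      else if s = v ∧ t = a then 1
      else if s = u ∨ s = v ∨ t = u ∨ t = v then 0
      else B'.mult s t)

/-- `N` is obtained by joining `N1` and `N2`: the two roots are identified into
a single node `u`, which becomes the child of a new root `r`.  The embeddings
`f1`, `f2` realise the copies of `N1` and `N2` inside `N`. -/
def IsJoinOf (N N1 N2 : DG) : Prop :=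
  ∃ (f1 f2 : ℕ → ℕ) (r u : ℕ),
    N.IsRoot r ∧ u ∈ N.verts ∧ N.mult r u = 1 ∧
    Set.InjOn f1 N1.verts ∧ Set.InjOn f2 N2.verts ∧
    (∀ v, N1.IsRoot v → f1 v = u) ∧ (∀ v, N2.IsRoot v → f2 v = u) ∧
    (∀ w, w ∈ N.verts ↔ (w = r ∨ (∃ v ∈ N1.verts, f1 v = w) ∨ (∃ v ∈ N2.verts, f2 v = w))) ∧
    (∀ v1 ∈ N1.verts, ∀ v2 ∈ N2.verts, f1 v1 = f2 v2 → N1.IsRoot v1 ∧ N2.IsRoot v2) ∧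
    (∀ v ∈ N1.verts, f1 v ≠ r) ∧ (∀ v ∈ N2.verts, f2 v ≠ r) ∧
    (∀ a ∈ N1.verts, ∀ b ∈ N1.verts, N.mult (f1 a) (f1 b) = N1.mult a b) ∧
    (∀ a ∈ N2.verts, ∀ b ∈ N2.verts, N.mult (f2 a) (f2 b) = N2.mult a b) ∧
    (∀ a b, N.Adj a b →
      (a = r ∧ b = u) ∨
      (∃ a' ∈ N1.verts, ∃ b' ∈ N1.verts, f1 a' = a ∧ f1 b' = b ∧ N1.Adj a' b') ∨
      (∃ a' ∈ N2.verts, ∃ b' ∈ N2.verts, f2 a' = a ∧ f2 b' = b ∧ N2.Adj a' b')) ∧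
    (∀ v ∈ N1.verts, N.label (f1 v) = N1.label v) ∧
    (∀ v ∈ N2.verts, N.label (f2 v) = N2.label v) ∧
    N.label r = none

/-- Delete a node and all incident edges. -/
def deleteNode (G : DG) (v : ℕ) : DG where
  verts := G.verts.erase v
  mult := fun a b => if a = v ∨ b = v then 0 else G.mult a b
  label := fun a => if a = v then none else G.label a

/-- Suppress an in-degree-1 out-degree-1 node `v` with parent `p` and child `c`. -/
def suppressNode (G : DG) (v p c : ℕ) : DG where
  verts := G.verts.erase v
  mult := fun a b =>
    if a = v ∨ b = v then 0
    else if a = p ∧ b = c then G.mult a b + 1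
    else G.mult a b
  label := fun a => if a = v then none else G.label a

/-- One step of the restriction procedure for label set `S`: delete a leaf
labelled in `S` or an unlabelled node of out-degree 0, or suppress an
unlabelled node of in-degree 1 and out-degree 1. -/
inductive RStep (S : Finset ℕ) : DG → DG → Prop
  | del (G : DG) (v : ℕ) : v ∈ G.verts →
      ((∃ x ∈ S, G.label v = some x) ∨ (G.label v = none ∧ G.outDeg v = 0)) →
      RStep S G (G.deleteNode v)
  | suppress (G : DG) (v p c : ℕ) : v ∈ G.verts → G.label v = none →
      G.mult p v = 1 → G.inDeg v = 1 → G.mult v c = 1 → G.outDeg v = 1 →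
      RStep S G (G.suppressNode v p c)

/-- `Restricts S G G'` : `G' = G ∖ S`, i.e. `G'` is obtained from `G` by
deleting all leaves labelled in `S` and exhaustively deleting unlabelled nodes
of out-degree 0 and suppressing in-degree-1 out-degree-1 nodes. -/
def Restricts (S : Finset ℕ) (G G' : DG) : Prop :=
  Relation.ReflTransGen (RStep S) G G' ∧ ∀ H, ¬ RStep S G' H

/-- `𝒯 ∖ S` for a set of MUL-trees (empty results discarded). -/
def SetRestrict (S : Finset ℕ) (Ts : Set DG) : Set DG :=
  {T' | T'.verts.Nonempty ∧ ∃ T ∈ Ts, Restricts S T T'}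

/-- The member of the depth-1 forest of `T` keeping `y` and discarding the
subtree rooted at `y'` (here `r` is the root, `x` its child, `y,y'` the
children of `x`, which is suppressed). -/
noncomputable def f1del (T : DG) (r x y y' : ℕ) : DG where
  verts := (T.verts.filter (fun v => ¬ T.Reaches y' v)).erase x
  mult := fun a b =>
    if a = r ∧ b = y then 1
    else if a = x ∨ b = x ∨ T.Reaches y' a ∨ T.Reaches y' b then 0
    else T.mult a b
  label := fun v => if v = x ∨ T.Reaches y' v then none else T.label v

/-- `T'` is one of the two members of the depth-1 forest `F1(T)`. -/
def InF1 (T T' : DG) : Prop :=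
  ∃ r x y y', T.IsRoot r ∧ T.Adj r x ∧ T.Adj x y ∧ T.Adj x y' ∧ y ≠ y' ∧
    T' = f1del T r x y y'

/-- `F1(𝒯)`. -/
def F1Set (Ts : Set DG) : Set DG := {T' | ∃ T ∈ Ts, InF1 T T'}

/-- Two species labels occur in the same member of `F1(𝒯)`. -/
def SplitRel (Ts : Set DG) (a b : ℕ) : Prop :=
  ∃ T' ∈ F1Set Ts, (∃ u, T'.label u = some a) ∧ (∃ v, T'.label v = some b)

/-- `S` is one of the classes of the split partition of `X` for `𝒯`. -/
def SplitPart (X : Finset ℕ) (Ts : Set DG) (S : Finset ℕ) : Prop :=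
  ∃ a ∈ X, S = X.filter (fun b => Relation.EqvGen (SplitRel Ts) a b)

end DG

/-!
A beaded tree is a network, so only one direction needs work: a reticulation `v` that is not the
bottom of a bead can be turned into one without changing the reticulation number or losing a
weakly displayed MUL-tree. Let `p`, `q` be the parents of `v`, `z` its child, and `w` a lowest
common ancestor of `p` and `q`, with children `cp` towards `p` and `cq` towards `q`; by
minimality `cq` does not reach `p`. Delete `v`, replace the two arcs out of `w` by a bead
`w ⇒ u`, and hang the two branches below it in series: `w ⇒ u → cp ⇝ p → cq ⇝ q → z`. Every
other node keeps its degrees, a cycle would give a cycle in `N` plus the arc `p → cq`, and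
everything reachable in `N` stays reachable once `v` is read as `z`.

A weak embedding is determined, up to the choice of paths, by its node map: children lie strictly
below, and the two children of an internal node are reached through distinct out-arcs. This
survives the surgery: at `w` the two parallel arcs of the bead serve as distinct out-arcs, the
arc from `p` (resp. `q`) into `v` is replaced by the new arc out of `p` (resp. `q`), and the only
node that can sit on `v`, the root, is moved up to `q`. Induction on the number of non-bead reticulations finishes the
proof.
-/

namespace DG

section Walks

variable {N : DG}

lemma ArcOK.adj {e : Arc} (he : N.ArcOK e) : N.Adj e.1 e.2.1 :=
  Nat.lt_of_le_of_lt (Nat.zero_le _) he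

lemma IsWalk.ne_nil {p : List Arc} {a b : ℕ} (h : N.IsWalk p a b) : p ≠ [] := h.1

lemma IsWalk.tail {e : Arc} {l : List Arc} {a b : ℕ} (h : N.IsWalk (e :: l) a b)
    (hl : l ≠ []) : N.IsWalk l e.2.1 b := by
  obtain ⟨-, harcs, hchain, -, hlast⟩ := h
  obtain ⟨f, l, rfl⟩ := List.exists_cons_of_ne_nil hl
  refine ⟨hl, fun g hg => harcs g (List.mem_cons_of_mem _ hg), hchain.tail, ?_, ?_⟩
  · simp [(List.isChain_cons_cons.1 hchain).1]
  · simpa using hlast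

lemma IsWalk.reaches_of_cons {e : Arc} {l : List Arc} {a b : ℕ}
    (h : N.IsWalk (e :: l) a b) : N.Reaches e.2.1 b := by
  induction l generalizing e a with
  | nil =>
    obtain rfl : e.2.1 = b := by simpa using h.2.2.2.2
    exact Relation.ReflTransGen.refl
  | cons f l ih =>
    have hef : e.2.1 = f.1 := (List.isChain_cons_cons.1 h.2.2.1).1
    exact Relation.ReflTransGen.head (hef ▸ (h.2.1 f (by simp)).adj)
      (ih (h.tail (List.cons_ne_nil f l)))

lemma IsWalk.sReaches {p : List Arc} {a b : ℕ} (h : N.IsWalk p a b) : N.SReaches a b := by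
  obtain ⟨e, l, rfl⟩ := List.exists_cons_of_ne_nil h.ne_nil
  obtain rfl : e.1 = a := by simpa using h.2.2.2.1
  exact Relation.TransGen.head' (h.2.1 e (by simp)).adj h.reaches_of_cons

lemma exists_isWalk_cons {e : Arc} {b : ℕ} (he : N.ArcOK e) (hr : N.Reaches e.2.1 b) :
    ∃ l, N.IsWalk (e :: l) e.1 b := by
  generalize hc : e.2.1 = c at hr
  induction hr using Relation.ReflTransGen.head_induction_on generalizing e with
  | refl =>
    refine ⟨[], List.cons_ne_nil _ _, ?_, List.isChain_singleton _, rfl, by simp [hc]⟩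
    simpa using he
  | head hadj _ ih =>
    obtain ⟨l, -, harcs, hchain, -, hlast⟩ := ih (e := (_, _, 0)) hadj rfl
    refine ⟨_ :: l, List.cons_ne_nil _ _, ?_, ?_, rfl, by simpa using hlast⟩
    · simpa [he] using harcs
    · exact List.isChain_cons_cons.2 ⟨hc, hchain⟩

end Walks

section Counting

variable {s : Finset ℕ} {f : ℕ → ℕ} {a b : ℕ}

lemma eq_indicator_of_sum_eq_one (hf : ∀ t ∉ s, f t = 0) (hsum : ∑ t ∈ s, f t = 1)
    (ha : a ∈ s) (hfa : 0 < f a) (t : ℕ) : f t = if t = a then 1 else 0 := by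
  have hsplit := Finset.add_sum_erase s f ha
  split_ifs with hta
  · subst hta; omega
  by_cases hts : t ∈ s
  · exact Finset.sum_eq_zero_iff.1 (by omega) t (Finset.mem_erase.2 ⟨hta, hts⟩)
  · exact hf t hts

lemma eq_indicator_of_sum_eq_two (hf : ∀ t ∉ s, f t = 0) (hsum : ∑ t ∈ s, f t = 2)
    (ha : a ∈ s) (hb : b ∈ s) (hab : a ≠ b) (hfa : 0 < f a) (hfb : 0 < f b) (t : ℕ) :
    f t = (if t = a then 1 else 0) + (if t = b then 1 else 0) := by
  have hsub : {a, b} ⊆ s := Finset.insert_subset ha (Finset.singleton_subset_iff.2 hb)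
  have hsplit := Finset.sum_sdiff hsub (f := f)
  rw [Finset.sum_pair hab] at hsplit
  by_cases hta : t = a
  · subst hta; rw [if_pos rfl, if_neg hab]; omega
  by_cases htb : t = b
  · subst htb; rw [if_pos rfl, if_neg hta]; omega
  rw [if_neg hta, if_neg htb]
  by_cases hts : t ∈ s
  · have hrest : ∑ x ∈ s \ {a, b}, f x = 0 := by omega
    exact Finset.sum_eq_zero_iff.1 hrest t (by simp [hts, hta, htb])
  · exact hf t hts

lemma sum_insert_erase_ite {s : Finset ℕ} {u v : ℕ} (hu : u ∉ s) (hv : v ∈ s) (f : ℕ → ℕ) :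
    ∑ t ∈ insert u (s.erase v), (if t = v ∨ t = u then 0 else f t) + f v = ∑ t ∈ s, f t := by
  rw [Finset.sum_insert fun h => hu (Finset.mem_of_mem_erase h), if_pos (Or.inr rfl), zero_add,
    ← Finset.sum_erase_add s f hv]
  congr 1
  refine Finset.sum_congr rfl fun t ht => if_neg ?_
  rintro (rfl | rfl)
  · exact Finset.notMem_erase _ _ ht
  · exact hu (Finset.mem_of_mem_erase ht)

end Counting

section Degrees

variable {N : DG}

lemma Supported.mult_eq_zero_left (hN : N.Supported) {s t : ℕ} (hs : s ∉ N.verts) :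
    N.mult s t = 0 :=
  Nat.eq_zero_of_not_pos fun h => hs (hN s t h).1

lemma Supported.mult_eq_zero_right (hN : N.Supported) {s t : ℕ} (ht : t ∉ N.verts) :
    N.mult s t = 0 :=
  Nat.eq_zero_of_not_pos fun h => ht (hN s t h).2

lemma exists_adj_of_outDeg_pos {x : ℕ} (h : 0 < N.outDeg x) : ∃ t ∈ N.verts, N.Adj x t := by
  obtain ⟨t, ht, hpos⟩ := Finset.exists_ne_zero_of_sum_ne_zero h.ne'
  exact ⟨t, ht, Nat.pos_of_ne_zero hpos⟩

lemma exists_adj_of_inDeg_pos {x : ℕ} (h : 0 < N.inDeg x) : ∃ s ∈ N.verts, N.Adj s x := by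
  obtain ⟨s, hs, hpos⟩ := Finset.exists_ne_zero_of_sum_ne_zero h.ne'
  exact ⟨s, hs, Nat.pos_of_ne_zero hpos⟩

lemma mult_le_inDeg {s x : ℕ} (hs : s ∈ N.verts) : N.mult s x ≤ N.inDeg x :=
  Finset.single_le_sum (f := fun s => N.mult s x) (fun _ _ => Nat.zero_le _) hs

lemma Supported.inDeg_pos_of_adj (hN : N.Supported) {s x : ℕ} (h : N.Adj s x) :
    0 < N.inDeg x :=
  Nat.lt_of_lt_of_le h (mult_le_inDeg (hN s x h).1)

lemma Supported.two_le_outDeg (hN : N.Supported) {x a b : ℕ} (ha : N.Adj x a) (hb : N.Adj x b)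
    (hab : a ≠ b) : 2 ≤ N.outDeg x := by
  have hle : N.mult x a + N.mult x b ≤ N.outDeg x := by
    rw [← Finset.sum_pair hab]
    exact Finset.sum_le_sum_of_subset (Finset.insert_subset (hN x a ha).2
      (Finset.singleton_subset_iff.2 (hN x b hb).2))
  have : 0 < N.mult x a := ha
  have : 0 < N.mult x b := hb
  omega

lemma Supported.mult_eq_of_outDeg_eq_one (hN : N.Supported) {v z : ℕ} (hv : N.outDeg v = 1)
    (hz : N.Adj v z) (t : ℕ) : N.mult v t = if t = z then 1 else 0 :=
  eq_indicator_of_sum_eq_one (fun _ => hN.mult_eq_zero_right) hv (hN v z hz).2 hz t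

lemma Supported.mult_eq_of_outDeg_eq_two (hN : N.Supported) {w a b : ℕ} (hw : N.outDeg w = 2)
    (ha : N.Adj w a) (hb : N.Adj w b) (hab : a ≠ b) (t : ℕ) :
    N.mult w t = (if t = a then 1 else 0) + (if t = b then 1 else 0) :=
  eq_indicator_of_sum_eq_two (fun _ => hN.mult_eq_zero_right) hw (hN w a ha).2 (hN w b hb).2
    hab ha hb t

lemma Supported.exists_parents_of_inDeg_eq_two (hN : N.Supported) {v : ℕ}
    (hv : N.inDeg v = 2) (hnb : ∀ s, N.mult s v ≠ 2) :
    ∃ p q, p ≠ q ∧ ∀ s, N.mult s v = (if s = p then 1 else 0) + (if s = q then 1 else 0) := by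
  obtain ⟨p, hp, hpv⟩ := exists_adj_of_inDeg_pos (N := N) (x := v) (by rw [hv]; exact two_pos)
  have hp1 : N.mult p v = 1 := by
    have : 0 < N.mult p v := hpv
    have := hnb p
    have := hv ▸ mult_le_inDeg (x := v) hp
    omega
  have hrest : N.mult p v + ∑ s ∈ N.verts.erase p, N.mult s v = N.inDeg v :=
    Finset.add_sum_erase _ (fun s => N.mult s v) hp
  obtain ⟨q, hq, hqv⟩ := Finset.exists_ne_zero_of_sum_ne_zero
    (s := N.verts.erase p) (f := fun s => N.mult s v) (by omega)
  obtain ⟨hqp, hq⟩ := Finset.mem_erase.1 hq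
  exact ⟨p, q, Ne.symm hqp, eq_indicator_of_sum_eq_two (fun _ => hN.mult_eq_zero_left) hv hp hq
    (Ne.symm hqp) hpv (Nat.pos_of_ne_zero hqv)⟩

end Degrees

section Structure

variable {X : Finset ℕ} {N T : DG}

lemma IsMulTree.outDeg_eq_two_of_adj (hT : T.IsMulTree X) {x a b : ℕ} (ha : T.Adj x a)
    (hb : T.Adj x b) (hab : a ≠ b) : T.outDeg x = 2 := by
  have := hT.supported.two_le_outDeg ha hb hab
  rcases hT.nodes x (hT.supported x a ha).1 with ⟨-, -, h⟩ | ⟨-, -, h⟩ | ⟨-, -, h⟩ <;> omega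

lemma IsMulTree.eq_or_eq_of_adj (hT : T.IsMulTree X) {x a b c : ℕ} (ha : T.Adj x a)
    (hb : T.Adj x b) (hab : a ≠ b) (hc : T.Adj x c) : c = a ∨ c = b := by
  have hmult := hT.supported.mult_eq_of_outDeg_eq_two (hT.outDeg_eq_two_of_adj ha hb hab) ha hb
    hab c
  have : 0 < T.mult x c := hc
  by_contra! h
  rw [if_neg h.1, if_neg h.2] at hmult
  omega

lemma IsMulTree.exists_two_children (hT : T.IsMulTree X) {y : ℕ} (hy : T.IsTreeNode y) :
    ∃ c₁ c₂, T.Adj y c₁ ∧ T.Adj y c₂ ∧ c₁ ≠ c₂ := by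
  obtain ⟨-, -, hdeg⟩ := hy
  obtain ⟨c₁, hc₁, h₁⟩ := exists_adj_of_outDeg_pos (N := T) (x := y) (by omega)
  have hrest : T.mult y c₁ + ∑ t ∈ T.verts.erase c₁, T.mult y t = T.outDeg y :=
    Finset.add_sum_erase _ _ hc₁
  have := hT.simple y c₁
  obtain ⟨c₂, hc₂, h₂⟩ := Finset.exists_ne_zero_of_sum_ne_zero
    (s := T.verts.erase c₁) (f := T.mult y) (by omega)
  exact ⟨c₁, c₂, h₁, Nat.pos_of_ne_zero h₂, fun h => (Finset.mem_erase.1 hc₂).1 h.symm⟩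

lemma IsNetwork.outDeg_le_two (hN : N.IsNetwork X) {x : ℕ} (hx : x ∈ N.verts) :
    N.outDeg x ≤ 2 := by
  rcases hN.nodes x hx with ⟨-, -, h⟩ | ⟨-, -, h⟩ | ⟨-, -, h⟩ | ⟨-, -, h⟩ <;> omega

lemma Acyclic.ne_of_sReaches (hN : N.Acyclic) {a b : ℕ} (h : N.SReaches a b) : a ≠ b :=
  fun hab => hN a (hab ▸ h)

lemma exists_min_of_acyclic {r : ℕ → ℕ → Prop} (hr : ∀ x, ¬ Relation.TransGen r x x)
    {s : Finset ℕ} (hs : s.Nonempty) : ∃ x ∈ s, ∀ y ∈ s, ¬ Relation.TransGen r y x := by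
  let r' : s → s → Prop := fun a b => Relation.TransGen r a b
  have : IsTrans s r' := ⟨fun _ _ _ h₁ h₂ => h₁.trans h₂⟩
  have : Std.Irrefl r' := ⟨fun a => hr a⟩
  obtain ⟨⟨x, hx⟩, -, hmin⟩ := (Finite.wellFounded_of_trans_of_irrefl r').has_min Set.univ
    ⟨⟨_, hs.choose_spec⟩, trivial⟩
  exact ⟨x, hx, fun y hy => hmin ⟨y, hy⟩ trivial⟩

lemma IsNetwork.reaches_of_isRoot (hN : N.IsNetwork X) {r : ℕ} (hr : N.IsRoot r) {x : ℕ}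
    (hx : x ∈ N.verts) : N.Reaches r x := by
  by_contra hrx
  obtain ⟨y, hy, hmin⟩ := exists_min_of_acyclic hN.acyclic
    (s := N.verts.filter fun y => ¬ N.Reaches r y) ⟨x, Finset.mem_filter.2 ⟨hx, hrx⟩⟩
  obtain ⟨hy, hry⟩ := Finset.mem_filter.1 hy
  have hin : 0 < N.inDeg y := by
    rcases hN.nodes y hy with h | ⟨-, h, -⟩ | ⟨-, h, -⟩ | ⟨-, h, -⟩
    · exact absurd (hN.root.unique h hr ▸ Relation.ReflTransGen.refl) hry
    all_goals omega
  obtain ⟨s, hs, hsy⟩ := exists_adj_of_inDeg_pos hin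
  refine hry (Relation.ReflTransGen.tail (not_not.1 fun hrs => ?_) hsy)
  exact hmin s (Finset.mem_filter.2 ⟨hs, hrs⟩) (Relation.TransGen.single hsy)

lemma IsNetwork.exists_isLCA (hN : N.IsNetwork X) {p q : ℕ} (hp : p ∈ N.verts)
    (hq : q ∈ N.verts) : ∃ w, N.IsLCA w p q := by
  obtain ⟨r, hr, -⟩ := hN.root
  obtain ⟨w, hw, hmin⟩ := exists_min_of_acyclic (r := Function.swap N.Adj)
    (fun x h => hN.acyclic x (Relation.transGen_swap.1 h))
    (s := N.verts.filter fun w => N.Reaches w p ∧ N.Reaches w q)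
    ⟨r, Finset.mem_filter.2 ⟨hr.1, hN.reaches_of_isRoot hr hp, hN.reaches_of_isRoot hr hq⟩⟩
  obtain ⟨-, hwp, hwq⟩ := Finset.mem_filter.1 hw
  refine ⟨w, hwp, hwq, fun w' hww' hw' => hmin w' ?_ (Relation.transGen_swap.2 hww')⟩
  obtain ⟨c, -, hc⟩ := Relation.TransGen.tail'_iff.1 hww'
  exact Finset.mem_filter.2 ⟨(hN.supported _ _ hc).2, hw'⟩

lemma Acyclic.sup_arc (hN : N.Acyclic) {a b : ℕ} (hba : ¬ N.Reaches b a) (x : ℕ) :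
    ¬ Relation.TransGen (fun s t => N.Adj s t ∨ (s = a ∧ t = b)) x x := by
  have key : ∀ {x y}, Relation.TransGen (fun s t => N.Adj s t ∨ (s = a ∧ t = b)) x y →
      N.SReaches x y ∨ (N.Reaches x a ∧ N.Reaches b y) := by
    intro x y h
    induction h with
    | single h =>
      rcases h with h | ⟨rfl, rfl⟩
      · exact Or.inl (Relation.TransGen.single h)
      · exact Or.inr ⟨Relation.ReflTransGen.refl, Relation.ReflTransGen.refl⟩
    | tail _ hyz ih =>
      rcases hyz with hyz | ⟨rfl, rfl⟩
      · exact ih.imp (·.tail hyz) fun h => ⟨h.1, h.2.tail hyz⟩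
      · rcases ih with h | ⟨-, h⟩
        · exact Or.inr ⟨h.to_reflTransGen, Relation.ReflTransGen.refl⟩
        · exact absurd h hba
  intro hx
  rcases key hx with h | ⟨h₁, h₂⟩
  · exact hN x h
  · exact hba (h₂.trans h₁)

lemma Acyclic.exists_child_toward (hN : N.Acyclic) {w y v : ℕ} (hyv : N.Adj y v)
    (hwy : N.Reaches w y) :
    ∃ c, N.Adj w c ∧ ((w = y ∧ c = v) ∨ (w ≠ y ∧ c ≠ v ∧ N.Reaches c y)) := by
  by_cases hw : w = y
  · exact ⟨v, hw ▸ hyv, Or.inl ⟨hw, rfl⟩⟩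
  obtain ⟨c, hwc, hcy⟩ := (Relation.ReflTransGen.cases_head hwy).resolve_left hw
  exact ⟨c, hwc, Or.inr ⟨hw, fun hcv => hN y (Relation.TransGen.head' hyv (hcv ▸ hcy)), hcy⟩⟩

lemma IsLCA.exists_children (hN : N.Acyclic) {w p q v : ℕ} (hw : N.IsLCA w p q)
    (hpq : p ≠ q) (hpv : N.Adj p v) (hqv : N.Adj q v) :
    ∃ cp cq, N.Adj w cp ∧ N.Adj w cq ∧ cp ≠ cq ∧
      ((w = p ∧ cp = v) ∨ (w ≠ p ∧ cp ≠ v ∧ N.Reaches cp p)) ∧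
      ((w = q ∧ cq = v) ∨ (w ≠ q ∧ cq ≠ v ∧ N.Reaches cq q)) ∧ ¬ N.Reaches cq p := by
  obtain ⟨hwp, hwq, hmin⟩ := hw
  obtain ⟨cp, hcp, hcp'⟩ := hN.exists_child_toward hpv hwp
  obtain ⟨cq, hcq, hcq'⟩ := hN.exists_child_toward hqv hwq
  have hnr : ¬ N.Reaches cq p := by
    rcases hcq' with ⟨-, rfl⟩ | ⟨-, -, hcqq⟩
    · exact fun h => hN p (Relation.TransGen.head' hpv h)
    · exact fun h => hmin cq (Relation.TransGen.single hcq) ⟨h, hcqq⟩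
  refine ⟨cp, cq, hcp, hcq, ?_, hcp', hcq', hnr⟩
  rintro rfl
  rcases hcp' with ⟨hwp, rfl⟩ | ⟨-, hcpv, hcpp⟩
  · rcases hcq' with ⟨hwq, -⟩ | ⟨-, hcqv, -⟩
    exacts [hpq (hwp.symm.trans hwq), hcqv rfl]
  · exact hnr hcpp

end Structure

section Embedding

/-- `w` has two distinct out-arcs (possibly parallel), the first leading to `a` and the second
to `b`. -/
def BranchesTo (N : DG) (w a b : ℕ) : Prop :=
  ∃ t t', N.Adj w t ∧ N.Adj w t' ∧ (t ≠ t' ∨ 2 ≤ N.mult w t) ∧ N.Reaches t a ∧ N.Reaches t' b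

/-- The node map of a weak embedding, with the edge paths forgotten. -/
structure IsNodeEmbedding (T N : DG) (h : ℕ → ℕ) : Prop where
  leaf : ∀ x, T.IsLeafNode x → N.IsLeafNode (h x) ∧ N.label (h x) = T.label x
  sReaches : ∀ x y, T.Adj x y → N.SReaches (h x) (h y)
  branchesTo : ∀ x y y', T.Adj x y → T.Adj x y' → y ≠ y' → N.BranchesTo (h x) (h y) (h y')

variable {X : Finset ℕ} {N T : DG}

lemma branchesTo_of_arcs {w a b : ℕ} {e f : Arc} (he : N.ArcOK e) (hf : N.ArcOK f)
    (hef : e ≠ f) (hew : e.1 = w) (hfw : f.1 = w) (hea : N.Reaches e.2.1 a)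
    (hfb : N.Reaches f.2.1 b) : N.BranchesTo w a b := by
  refine ⟨e.2.1, f.2.1, hew ▸ he.adj, hfw ▸ hf.adj, ?_, hea, hfb⟩
  by_cases htt : e.2.1 = f.2.1
  · have hidx : e.2.2 ≠ f.2.2 := fun h => hef (Prod.ext (hew.trans hfw.symm) (Prod.ext htt h))
    have hf' : f.2.2 < N.mult e.1 e.2.1 := by rw [hew, htt, ← hfw]; exact hf
    have he' : e.2.2 < N.mult e.1 e.2.1 := he
    exact Or.inr (by rw [← hew]; omega)
  · exact Or.inl htt

lemma BranchesTo.exists_arcs {w a b : ℕ} (h : N.BranchesTo w a b) :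
    ∃ e f : Arc, N.ArcOK e ∧ N.ArcOK f ∧ e ≠ f ∧ e.1 = w ∧ f.1 = w ∧
      N.Reaches e.2.1 a ∧ N.Reaches f.2.1 b := by
  obtain ⟨t, t', ht, ht', hne, hta, htb⟩ := h
  by_cases htt : t = t'
  · subst htt
    have h2 : 2 ≤ N.mult w t := hne.resolve_left (not_not.2 rfl)
    exact ⟨(w, t, 0), (w, t, 1), ht, h2, by simp, rfl, rfl, hta, htb⟩
  · exact ⟨(w, t, 0), (w, t', 0), ht, ht', by simp [htt], rfl, rfl, hta, htb⟩

lemma Displays.exists_isNodeEmbedding (hd : N.Displays T) : ∃ h, T.IsNodeEmbedding N h := by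
  obtain ⟨h, hE, -, hleaf, hwalk, hhead⟩ := hd
  refine ⟨h, hleaf, fun x y hxy => (hwalk x y hxy).sReaches, fun x y y' hy hy' hne => ?_⟩
  have w₁ := hwalk x y hy
  have w₂ := hwalk x y' hy'
  obtain ⟨e, l, hel⟩ := List.exists_cons_of_ne_nil w₁.ne_nil
  obtain ⟨f, l', hfl⟩ := List.exists_cons_of_ne_nil w₂.ne_nil
  have hef : e ≠ f := fun hef => hhead x y y' hy hy' hne (by rw [hel, hfl, hef]; rfl)
  rw [hel] at w₁
  rw [hfl] at w₂
  exact branchesTo_of_arcs (w₁.2.1 e (by simp)) (w₂.2.1 f (by simp)) hef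
    (by simpa using w₁.2.2.2.1) (by simpa using w₂.2.2.2.1) w₁.reaches_of_cons
    w₂.reaches_of_cons

lemma IsNodeEmbedding.exists_firstArcs (hT : T.IsMulTree X) {h : ℕ → ℕ}
    (hh : T.IsNodeEmbedding N h) :
    ∃ arc : ℕ → ℕ → Arc,
      (∀ x y, T.Adj x y →
        N.ArcOK (arc x y) ∧ (arc x y).1 = h x ∧ N.Reaches (arc x y).2.1 (h y)) ∧
      ∀ x y y', T.Adj x y → T.Adj x y' → y ≠ y' → arc x y ≠ arc x y' := by
  have hx : ∀ x, ∃ g : ℕ → Arc,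
      (∀ y, T.Adj x y → N.ArcOK (g y) ∧ (g y).1 = h x ∧ N.Reaches (g y).2.1 (h y)) ∧
      ∀ y y', T.Adj x y → T.Adj x y' → y ≠ y' → g y ≠ g y' := by
    intro x
    by_cases h2 : ∃ y₁ y₂, T.Adj x y₁ ∧ T.Adj x y₂ ∧ y₁ ≠ y₂
    · obtain ⟨y₁, y₂, h₁, h₂, h₁₂⟩ := h2
      obtain ⟨e, f, he, hf, hef, hex, hfx, hey, hfy⟩ :=
        (hh.branchesTo x y₁ y₂ h₁ h₂ h₁₂).exists_arcs
      refine ⟨fun y => if y = y₁ then e else f, fun y hy => ?_, fun y y' hy hy' hne => ?_⟩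
      · by_cases hy₁ : y = y₁
        · subst hy₁; simpa using ⟨he, hex, hey⟩
        · obtain rfl := (hT.eq_or_eq_of_adj h₁ h₂ h₁₂ hy).resolve_left hy₁
          simpa [hy₁] using ⟨hf, hfx, hfy⟩
      · by_cases hy₁ : y = y₁
        · simpa [hy₁, show y' ≠ y₁ from hy₁ ▸ hne.symm] using hef
        · have hy₂ := (hT.eq_or_eq_of_adj h₁ h₂ h₁₂ hy).resolve_left hy₁
          have hy'₁ : y' = y₁ :=
            (hT.eq_or_eq_of_adj h₁ h₂ h₁₂ hy').resolve_right fun h => hne (hy₂.trans h.symm)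
          simpa [hy₁, hy'₁] using hef.symm
    · push Not at h2
      have hy : ∀ y, ∃ e : Arc,
          T.Adj x y → N.ArcOK e ∧ e.1 = h x ∧ N.Reaches e.2.1 (h y) := by
        intro y
        by_cases hxy : T.Adj x y
        · obtain ⟨c, hc, hcy⟩ := Relation.TransGen.head'_iff.1 (hh.sReaches x y hxy)
          exact ⟨(h x, c, 0), fun _ => ⟨hc, rfl, hcy⟩⟩
        · exact ⟨(0, 0, 0), fun h => absurd h hxy⟩
      choose g hg using hy
      exact ⟨g, hg, fun y y' hy hy' hne => absurd (h2 y y' hy hy') hne⟩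
  choose arc harc hdist using hx
  exact ⟨arc, harc, hdist⟩

lemma IsNodeEmbedding.displays (hT : T.IsMulTree X) (hN : N.Supported) {h : ℕ → ℕ}
    (hh : T.IsNodeEmbedding N h) : N.Displays T := by
  obtain ⟨arc, harc, hdist⟩ := hh.exists_firstArcs hT
  have hwalk : ∀ x y, ∃ l, T.Adj x y → N.IsWalk (arc x y :: l) (h x) (h y) := by
    intro x y
    by_cases hxy : T.Adj x y
    · obtain ⟨he, hex, hey⟩ := harc x y hxy
      obtain ⟨l, hl⟩ := exists_isWalk_cons he hey
      exact ⟨l, fun _ => hex ▸ hl⟩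
    · exact ⟨[], fun h => absurd h hxy⟩
  choose L hL using hwalk
  refine ⟨h, fun x y => arc x y :: L x y, fun x hx => ?_, hh.leaf, hL,
    fun x y y' hy hy' hne => by simpa using hdist x y y' hy hy' hne⟩
  have hinner : 0 < T.outDeg x → h x ∈ N.verts := fun hpos => by
    obtain ⟨y, -, hxy⟩ := exists_adj_of_outDeg_pos hpos
    obtain ⟨c, hc, -⟩ := Relation.TransGen.head'_iff.1 (hh.sReaches x y hxy)
    exact (hN _ _ hc).1
  rcases hT.nodes x hx with ⟨-, -, hdeg⟩ | ⟨-, -, hdeg⟩ | hleaf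
  · exact hinner (by omega)
  · exact hinner (by omega)
  · exact (hh.leaf x hleaf).1.1

end Embedding

noncomputable def nonBeadRetics (G : DG) : Finset ℕ :=
  G.verts.filter fun x => G.inDeg x = 2 ∧ ∀ s, G.mult s x ≠ 2

lemma IsNetwork.isBeadedTree_of_nonBeadRetics_eq_empty {X : Finset ℕ} {N : DG}
    (hN : N.IsNetwork X)
    (h : N.nonBeadRetics = ∅) : N.IsBeadedTree X := by
  refine ⟨hN, fun x hx hin => ?_⟩
  by_contra! hnb
  exact Finset.notMem_empty x (h ▸ Finset.mem_filter.2 ⟨hx, hin, hnb⟩)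

structure ReplacesRetic (N G : DG) (v u : ℕ) : Prop where
  retic : N.IsRetic v
  fresh : u ∉ N.verts
  verts : G.verts = insert u (N.verts.erase v)
  label : G.label = N.label
  inDeg : ∀ x ∈ N.verts, x ≠ v → G.inDeg x = N.inDeg x
  outDeg : ∀ x ∈ N.verts, x ≠ v → G.outDeg x = N.outDeg x
  inDeg_new : G.inDeg u = 2
  outDeg_new : G.outDeg u = 1

namespace ReplacesRetic

variable {X : Finset ℕ} {N G : DG} {v u : ℕ}

lemma mem_degrees_iff (hG : N.ReplacesRetic G v u) {x i o : ℕ} :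
    (x ∈ G.verts ∧ G.inDeg x = i ∧ G.outDeg x = o) ↔
      (x = u ∧ i = 2 ∧ o = 1) ∨ (x ≠ v ∧ x ∈ N.verts ∧ N.inDeg x = i ∧ N.outDeg x = o) := by
  rw [hG.verts, Finset.mem_insert, Finset.mem_erase]
  by_cases hxu : x = u
  · subst hxu
    simp only [true_and, hG.fresh, false_and, and_false, or_false, hG.inDeg_new,
      hG.outDeg_new, eq_comm]
  · simp only [hxu, false_or, false_and]
    constructor
    · rintro ⟨⟨hxv, hx⟩, hi, ho⟩
      exact ⟨hxv, hx, hG.inDeg x hx hxv ▸ hi, hG.outDeg x hx hxv ▸ ho⟩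
    · rintro ⟨hxv, hx, hi, ho⟩
      exact ⟨⟨hxv, hx⟩, hG.inDeg x hx hxv ▸ hi, hG.outDeg x hx hxv ▸ ho⟩

lemma isRoot_iff (hG : N.ReplacesRetic G v u) {x : ℕ} : G.IsRoot x ↔ N.IsRoot x := by
  have hv := hG.retic
  unfold IsRoot IsRetic at *
  rw [hG.mem_degrees_iff]
  constructor
  · rintro (⟨-, h, -⟩ | ⟨-, h⟩)
    exacts [absurd h (by norm_num), h]
  · rintro h
    exact Or.inr ⟨fun hxv => by subst hxv; omega, h⟩

lemma isLeafNode_iff (hG : N.ReplacesRetic G v u) {x : ℕ} :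
    G.IsLeafNode x ↔ N.IsLeafNode x := by
  have hv := hG.retic
  unfold IsLeafNode IsRetic at *
  rw [hG.mem_degrees_iff]
  constructor
  · rintro (⟨-, h, -⟩ | ⟨-, h⟩)
    exacts [absurd h (by norm_num), h]
  · rintro h
    exact Or.inr ⟨fun hxv => by subst hxv; omega, h⟩

lemma isNetwork (hG : N.ReplacesRetic G v u) (hN : N.IsNetwork X) (hac : G.Acyclic)
    (hsup : G.Supported) : G.IsNetwork X where
  root := (existsUnique_congr fun _ => hG.isRoot_iff).2 hN.root
  nodes x hx := by
    rw [hG.verts, Finset.mem_insert, Finset.mem_erase] at hx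
    rcases hx with rfl | ⟨hxv, hx⟩
    · exact Or.inr (Or.inr (Or.inl (hG.mem_degrees_iff.2 (Or.inl ⟨rfl, rfl, rfl⟩))))
    · rcases hN.nodes x hx with h | h | h | h
      · exact Or.inl (hG.mem_degrees_iff.2 (Or.inr ⟨hxv, h⟩))
      · exact Or.inr (Or.inl (hG.mem_degrees_iff.2 (Or.inr ⟨hxv, h⟩)))
      · exact Or.inr (Or.inr (Or.inl (hG.mem_degrees_iff.2 (Or.inr ⟨hxv, h⟩))))
      · exact Or.inr (Or.inr (Or.inr (hG.mem_degrees_iff.2 (Or.inr ⟨hxv, h⟩))))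
  acyclic := hac
  supported := hsup
  labels x := by rw [hG.label, hG.isLeafNode_iff]; exact hN.labels x
  labelsSub := hG.label ▸ hN.labelsSub
  labelsOnto := hG.label ▸ hN.labelsOnto

lemma reticNum_eq (hG : N.ReplacesRetic G v u) : G.reticNum = N.reticNum := by
  have hset : G.verts.filter (fun x => G.inDeg x = 2 ∧ G.outDeg x = 1) =
      insert u ((N.verts.filter fun x => N.inDeg x = 2 ∧ N.outDeg x = 1).erase v) := by
    ext x
    simp only [Finset.mem_filter, Finset.mem_insert, Finset.mem_erase, ← and_assoc,
      hG.mem_degrees_iff]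
    simp only [and_assoc, and_true]
  have hv : v ∈ N.verts.filter fun x => N.inDeg x = 2 ∧ N.outDeg x = 1 :=
    Finset.mem_filter.2 hG.retic
  have hu : u ∉ (N.verts.filter fun x => N.inDeg x = 2 ∧ N.outDeg x = 1).erase v :=
    fun h => hG.fresh (Finset.mem_filter.1 (Finset.mem_of_mem_erase h)).1
  rw [reticNum, reticNum, hset, Finset.card_insert_of_notMem hu, Finset.card_erase_add_one hv]

lemma card_nonBeadRetics_lt (hG : N.ReplacesRetic G v u) (hsup : G.Supported) (hv : v ∈ N.nonBeadRetics) (hu : ∃ s, G.mult s u = 2)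
    (hbead : ∀ s x, x ≠ v → N.mult s x = 2 → 2 ≤ G.mult s x) :
    G.nonBeadRetics.card < N.nonBeadRetics.card := by
  refine (Finset.card_le_card fun x hx => ?_).trans_lt (Finset.card_erase_lt_of_mem hv)
  obtain ⟨hxG, hin, hnb⟩ := Finset.mem_filter.1 hx
  obtain ⟨s₀, hs₀⟩ := hu
  have hxu : x ≠ u := fun h => hnb s₀ (h ▸ hs₀)
  rw [hG.verts, Finset.mem_insert, Finset.mem_erase] at hxG
  obtain ⟨hxv, hxN⟩ := hxG.resolve_left hxu
  refine Finset.mem_erase.2 ⟨hxv, Finset.mem_filter.2 ⟨hxN, hG.inDeg x hxN hxv ▸ hin,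
    fun s hs => hnb s ?_⟩⟩
  have h2 := hbead s x hxv hs
  have hle : G.mult s x ≤ G.inDeg x := mult_le_inDeg (hsup s x (show 0 < G.mult s x by omega)).1
  omega

end ReplacesRetic

/-- A reticulation `v` that is not the bottom of a bead, with parents `p`, `q` and child `z`,
a lowest common ancestor `w` of `p` and `q` with its children `cp` (towards `p`) and `cq`
(towards `q`), and a fresh node `u`. -/
structure BeadRelocation (N : DG) where
  v : ℕ
  p : ℕ
  q : ℕ
  z : ℕ
  w : ℕ
  cp : ℕ
  cq : ℕ
  u : ℕ
  acyclic : N.Acyclic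
  supported : N.Supported
  retic : N.IsRetic v
  mult_parent : ∀ s, N.mult s v = (if s = p then 1 else 0) + (if s = q then 1 else 0)
  p_ne_q : p ≠ q
  mult_child : ∀ t, N.mult v t = if t = z then 1 else 0
  mult_lca : ∀ t, N.mult w t = (if t = cp then 1 else 0) + (if t = cq then 1 else 0)
  cp_ne_cq : cp ≠ cq
  cp_spec : (w = p ∧ cp = v) ∨ (w ≠ p ∧ cp ≠ v ∧ N.Reaches cp p)
  cq_spec : (w = q ∧ cq = v) ∨ (w ≠ q ∧ cq ≠ v ∧ N.Reaches cq q)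
  not_reaches : ¬ N.Reaches cq p
  fresh : u ∉ N.verts

namespace BeadRelocation

variable {X : Finset ℕ} {N : DG} (S : BeadRelocation N)

def afterP : ℕ := if S.q = S.w then S.z else S.cq

def afterU : ℕ := if S.p = S.w then S.afterP else S.cp

/-- `v` is deleted, the two arcs out of `w` become a bead `w ⇒ u`, and `cp ⇝ p`, `cq ⇝ q` are
chained below `u` into the path `w ⇒ u → cp ⇝ p → cq ⇝ q → z`, skipping the part above `p`
(resp. `q`) when `w = p` (resp. `w = q`). -/
def graph : DG where
  verts := insert S.u (N.verts.erase S.v)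
  label := N.label
  mult s t :=
    (if s = S.v ∨ s = S.w ∨ s = S.u ∨ t = S.v ∨ t = S.u then 0 else N.mult s t)
      + (if s = S.w ∧ t = S.u then 2 else 0)
      + (if s = S.u ∧ t = S.afterU then 1 else 0)
      + (if s = S.p ∧ S.p ≠ S.w ∧ t = S.afterP then 1 else 0)
      + (if s = S.q ∧ S.q ≠ S.w ∧ t = S.z then 1 else 0)

lemma adj_p_v : N.Adj S.p S.v := by simp [Adj, S.mult_parent]
lemma adj_q_v : N.Adj S.q S.v := by simp [Adj, S.mult_parent]
lemma adj_v_z : N.Adj S.v S.z := by simp [Adj, S.mult_child]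
lemma adj_w_cp : N.Adj S.w S.cp := by simp [Adj, S.mult_lca]
lemma adj_w_cq : N.Adj S.w S.cq := by simp [Adj, S.mult_lca]

lemma eq_z_of_adj_v {t : ℕ} (h : N.Adj S.v t) : t = S.z := by
  by_contra ht
  simp [Adj, S.mult_child, ht] at h

lemma eq_p_or_eq_q_of_adj_v {s : ℕ} (h : N.Adj s S.v) : s = S.p ∨ s = S.q := by
  by_contra! hs
  simp [Adj, S.mult_parent, hs.1, hs.2] at h

lemma eq_cp_or_eq_cq_of_adj_w {t : ℕ} (h : N.Adj S.w t) : t = S.cp ∨ t = S.cq := by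
  by_contra! ht
  simp [Adj, S.mult_lca, ht.1, ht.2] at h

lemma ne_u_of_mem {x : ℕ} (hx : x ∈ N.verts) : x ≠ S.u := fun h => S.fresh (h ▸ hx)

lemma w_sReaches_v : N.SReaches S.w S.v := by
  rcases S.cp_spec with ⟨hw, -⟩ | ⟨-, -, hcp⟩
  · exact Relation.TransGen.single (hw ▸ S.adj_p_v)
  · exact Relation.TransGen.head S.adj_w_cp (Relation.TransGen.tail' hcp S.adj_p_v)

lemma p_ne_v : S.p ≠ S.v := S.acyclic.ne_of_sReaches (Relation.TransGen.single S.adj_p_v)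
lemma q_ne_v : S.q ≠ S.v := S.acyclic.ne_of_sReaches (Relation.TransGen.single S.adj_q_v)
lemma v_ne_z : S.v ≠ S.z := S.acyclic.ne_of_sReaches (Relation.TransGen.single S.adj_v_z)
lemma w_ne_v : S.w ≠ S.v := S.acyclic.ne_of_sReaches S.w_sReaches_v
lemma v_mem : S.v ∈ N.verts := S.retic.1
lemma w_mem : S.w ∈ N.verts := (S.supported _ _ S.adj_w_cp).1
lemma afterP_mem : S.afterP ∈ N.verts := by
  unfold afterP; split
  exacts [(S.supported _ _ S.adj_v_z).2, (S.supported _ _ S.adj_w_cq).2]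
lemma afterU_mem : S.afterU ∈ N.verts := by
  unfold afterU; split
  exacts [S.afterP_mem, (S.supported _ _ S.adj_w_cp).2]

lemma afterP_ne_v : S.afterP ≠ S.v := by
  unfold afterP; split
  · exact S.v_ne_z.symm
  · rcases S.cq_spec with ⟨h, -⟩ | ⟨-, h, -⟩
    exacts [absurd h.symm ‹_›, h]

lemma afterU_ne_v : S.afterU ≠ S.v := by
  unfold afterU; split
  · exact S.afterP_ne_v
  · rcases S.cp_spec with ⟨h, -⟩ | ⟨-, h, -⟩
    exacts [absurd h.symm ‹_›, h]

lemma cp_mem : S.cp ∈ N.verts := (S.supported _ _ S.adj_w_cp).2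
lemma cq_mem : S.cq ∈ N.verts := (S.supported _ _ S.adj_w_cq).2
lemma p_mem : S.p ∈ N.verts := (S.supported _ _ S.adj_p_v).1
lemma q_mem : S.q ∈ N.verts := (S.supported _ _ S.adj_q_v).1
lemma z_mem : S.z ∈ N.verts := (S.supported _ _ S.adj_v_z).2

lemma outDeg_w : N.outDeg S.w = 2 := by
  simp [outDeg, S.mult_lca, Finset.sum_add_distrib, S.cp_mem, S.cq_mem]

lemma graph_verts : S.graph.verts = insert S.u (N.verts.erase S.v) := rfl

lemma graph_mult_row {s : ℕ} (hsv : s ≠ S.v) (hsw : s ≠ S.w) (hsu : s ≠ S.u) (t : ℕ) :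
    S.graph.mult s t = (if t = S.v ∨ t = S.u then 0 else N.mult s t)
      + (if s = S.p ∧ S.p ≠ S.w ∧ t = S.afterP then 1 else 0)
      + (if s = S.q ∧ S.q ≠ S.w ∧ t = S.z then 1 else 0) := by
  simp [graph, hsv, hsw, hsu]

lemma graph_mult_col {t : ℕ} (htv : t ≠ S.v) (htu : t ≠ S.u) (s : ℕ) :
    S.graph.mult s t = (if s = S.v ∨ s = S.u then 0 else if s = S.w then 0 else N.mult s t)
      + (if s = S.u ∧ t = S.afterU then 1 else 0)
      + (if s = S.p ∧ S.p ≠ S.w ∧ t = S.afterP then 1 else 0)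
      + (if s = S.q ∧ S.q ≠ S.w ∧ t = S.z then 1 else 0) := by
  simp only [graph, htv, htu, or_false, and_false, if_false, add_zero]
  congr 3
  by_cases hs : s = S.v ∨ s = S.u <;> by_cases hsw : s = S.w <;> simp [hs, hsw]

lemma mem_graph_verts {x : ℕ} (hx : x ∈ N.verts) (hxv : x ≠ S.v) :
    x ∈ insert S.u (N.verts.erase S.v) :=
  Finset.mem_insert_of_mem (Finset.mem_erase.2 ⟨hxv, hx⟩)

lemma p_ne_u : S.p ≠ S.u := S.ne_u_of_mem S.p_mem
lemma q_ne_u : S.q ≠ S.u := S.ne_u_of_mem S.q_mem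
lemma w_ne_u : S.w ≠ S.u := S.ne_u_of_mem S.w_mem
lemma z_ne_u : S.z ≠ S.u := S.ne_u_of_mem S.z_mem
lemma afterP_ne_u : S.afterP ≠ S.u := S.ne_u_of_mem S.afterP_mem
lemma afterU_ne_u : S.afterU ≠ S.u := S.ne_u_of_mem S.afterU_mem

lemma graph_mult_u_left (t : ℕ) : S.graph.mult S.u t = if t = S.afterU then 1 else 0 := by
  simp [graph, S.w_ne_u.symm, S.p_ne_u.symm, S.q_ne_u.symm]

lemma graph_mult_u_right (s : ℕ) : S.graph.mult s S.u = if s = S.w then 2 else 0 := by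
  simp [graph, S.afterU_ne_u.symm, S.afterP_ne_u.symm, S.z_ne_u.symm]

lemma graph_mult_w_left (t : ℕ) : S.graph.mult S.w t = if t = S.u then 2 else 0 := by
  have := S.w_ne_u
  have := S.p_ne_q
  simp only [graph, true_or, or_true, if_true, true_and, zero_add, S.w_ne_u, false_and,
    if_false, add_zero]
  split_ifs <;> omega

lemma outDeg_graph {x : ℕ} (hx : x ∈ N.verts) (hxv : x ≠ S.v) :
    S.graph.outDeg x = N.outDeg x := by
  have hxu : x ≠ S.u := S.ne_u_of_mem hx
  by_cases hxw : x = S.w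
  · subst hxw
    rw [S.outDeg_w]
    simp [outDeg, S.graph_mult_w_left, graph_verts]
  have hsum := sum_insert_erase_ite S.fresh S.v_mem (N.mult x)
  rw [outDeg, graph_verts, Finset.sum_congr rfl fun t _ => S.graph_mult_row hxv hxw hxu t,
    Finset.sum_add_distrib, Finset.sum_add_distrib]
  have hp : ∑ t ∈ insert S.u (N.verts.erase S.v),
      (if x = S.p ∧ S.p ≠ S.w ∧ t = S.afterP then 1 else 0) = if x = S.p then 1 else 0 := by
    rcases eq_or_ne x S.p with rfl | hxp
    · simp [hxw, S.mem_graph_verts S.afterP_mem S.afterP_ne_v]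
    · simp [hxp]
  have hq : ∑ t ∈ insert S.u (N.verts.erase S.v),
      (if x = S.q ∧ S.q ≠ S.w ∧ t = S.z then 1 else 0) = if x = S.q then 1 else 0 := by
    rcases eq_or_ne x S.q with rfl | hxq
    · simp [hxw, S.mem_graph_verts S.z_mem S.v_ne_z.symm]
    · simp [hxq]
  rw [hp, hq, outDeg, ← hsum, S.mult_parent, add_assoc]

lemma inArcs_balance {x : ℕ} (hxv : x ≠ S.v) :
    (if x = S.afterU then 1 else 0) + (if S.p ≠ S.w ∧ x = S.afterP then 1 else 0)
      + (if S.q ≠ S.w ∧ x = S.z then 1 else 0) = N.mult S.w x + N.mult S.v x := by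
  have := S.p_ne_q
  have := S.cp_ne_cq
  rw [S.mult_lca, S.mult_child]
  unfold afterU afterP
  rcases S.cp_spec with ⟨hwp, hcp⟩ | ⟨hwp, hcp, -⟩ <;>
    rcases S.cq_spec with ⟨hwq, hcq⟩ | ⟨hwq, hcq, -⟩ <;> split_ifs <;> omega

lemma inDeg_graph {x : ℕ} (hx : x ∈ N.verts) (hxv : x ≠ S.v) :
    S.graph.inDeg x = N.inDeg x := by
  have hxu : x ≠ S.u := S.ne_u_of_mem hx
  have hsum := sum_insert_erase_ite S.fresh S.v_mem fun s => if s = S.w then 0 else N.mult s x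
  have hW : ∑ s ∈ N.verts, (if s = S.w then 0 else N.mult s x) + N.mult S.w x = N.inDeg x := by
    rw [Finset.sum_ite, Finset.sum_const_zero, zero_add, Finset.filter_ne', inDeg,
      Finset.sum_erase_add _ _ S.w_mem]
  rw [inDeg, graph_verts, Finset.sum_congr rfl fun s _ => S.graph_mult_col hxv hxu s,
    Finset.sum_add_distrib, Finset.sum_add_distrib, Finset.sum_add_distrib]
  have hu : ∑ s ∈ insert S.u (N.verts.erase S.v),
      (if s = S.u ∧ x = S.afterU then 1 else 0) = if x = S.afterU then 1 else 0 := by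
    simp [ite_and]
  have hp : ∑ s ∈ insert S.u (N.verts.erase S.v),
      (if s = S.p ∧ S.p ≠ S.w ∧ x = S.afterP then 1 else 0) =
        if S.p ≠ S.w ∧ x = S.afterP then 1 else 0 := by
    simp [ite_and, S.mem_graph_verts S.p_mem S.p_ne_v]
  have hq : ∑ s ∈ insert S.u (N.verts.erase S.v),
      (if s = S.q ∧ S.q ≠ S.w ∧ x = S.z then 1 else 0) =
        if S.q ≠ S.w ∧ x = S.z then 1 else 0 := by
    simp [ite_and, S.mem_graph_verts S.q_mem S.q_ne_v]
  have hbal := S.inArcs_balance hxv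
  rw [if_neg S.w_ne_v.symm] at hsum
  rw [hu, hp, hq]
  unfold inDeg at hW ⊢
  omega

lemma inDeg_u : S.graph.inDeg S.u = 2 := by
  simp [inDeg, graph_verts, S.graph_mult_u_right, S.mem_graph_verts S.w_mem S.w_ne_v]

lemma outDeg_u : S.graph.outDeg S.u = 1 := by
  simp [outDeg, graph_verts, S.graph_mult_u_left, S.mem_graph_verts S.afterU_mem S.afterU_ne_v]

lemma adj_graph_cases {s t : ℕ} (h : S.graph.Adj s t) :
    (s = S.w ∧ t = S.u) ∨ (s = S.u ∧ t = S.afterU) ∨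
      (s ≠ S.v ∧ s ≠ S.w ∧ s ≠ S.u ∧ t ≠ S.v ∧ t ≠ S.u ∧
        (N.Adj s t ∨ (s = S.p ∧ S.p ≠ S.w ∧ t = S.afterP) ∨
          (s = S.q ∧ S.q ≠ S.w ∧ t = S.z))) := by
  by_cases hsw : s = S.w
  · subst hsw
    have : 0 < S.graph.mult S.w t := h
    rw [S.graph_mult_w_left] at this
    exact Or.inl ⟨rfl, by by_contra ht; simp [ht] at this⟩
  by_cases hsu : s = S.u
  · subst hsu
    have : 0 < S.graph.mult S.u t := h
    rw [S.graph_mult_u_left] at this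
    exact Or.inr (Or.inl ⟨rfl, by by_contra ht; simp [ht] at this⟩)
  by_cases hsv : s = S.v
  · subst hsv
    simp [Adj, graph, hsw, hsu, S.p_ne_v.symm, S.q_ne_v.symm] at h
  have h' : 0 < S.graph.mult s t := h
  rw [S.graph_mult_row hsv hsw hsu] at h'
  have htv : t ≠ S.v := by
    rintro rfl
    simp [S.afterP_ne_v.symm, S.v_ne_z] at h'
  have htu : t ≠ S.u := by
    rintro rfl
    simp [S.afterP_ne_u.symm, S.z_ne_u.symm] at h'
  refine Or.inr (Or.inr ⟨hsv, hsw, hsu, htv, htu, ?_⟩)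
  simp only [htv, htu, or_false, if_false] at h'
  by_cases hN : N.Adj s t
  · exact Or.inl hN
  · have : N.mult s t = 0 := Nat.eq_zero_of_not_pos hN
    split_ifs at h' <;> omega

lemma graph_supported : S.graph.Supported := by
  intro s t h
  simp only [graph_verts]
  rcases S.adj_graph_cases h with ⟨rfl, rfl⟩ | ⟨rfl, rfl⟩ | ⟨hsv, -, -, htv, -, hst⟩
  · exact ⟨S.mem_graph_verts S.w_mem S.w_ne_v, Finset.mem_insert_self _ _⟩
  · exact ⟨Finset.mem_insert_self _ _, S.mem_graph_verts S.afterU_mem S.afterU_ne_v⟩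
  rcases hst with hst | ⟨rfl, -, rfl⟩ | ⟨rfl, -, rfl⟩
  · exact ⟨S.mem_graph_verts (S.supported s t hst).1 hsv,
      S.mem_graph_verts (S.supported s t hst).2 htv⟩
  · exact ⟨S.mem_graph_verts S.p_mem hsv, S.mem_graph_verts S.afterP_mem htv⟩
  · exact ⟨S.mem_graph_verts S.q_mem hsv, S.mem_graph_verts S.z_mem htv⟩

/-- Acyclic because `cq` does not reach `p`. -/
def ShortcutAdj (a b : ℕ) : Prop := N.Adj a b ∨ (a = S.p ∧ b = S.cq)

lemma adj_w_afterU : N.Adj S.w S.afterU := by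
  unfold afterU afterP
  split_ifs with hp hq
  · exact absurd (hp.trans hq.symm) S.p_ne_q
  · exact S.adj_w_cq
  · exact S.adj_w_cp

lemma eq_w_of_graph_adj_u {s : ℕ} (h : S.graph.Adj s S.u) : s = S.w := by
  by_contra hs
  have : 0 < S.graph.mult s S.u := h
  simp [S.graph_mult_u_right, hs] at this

/-- Every arc of the new graph, except those of the bead, becomes a path of `N` plus `p → cq`
once `u` is collapsed onto `w`. -/
lemma transGen_of_graph_adj {s t : ℕ} (h : S.graph.Adj s t) (ht : t ≠ S.u) :
    Relation.TransGen S.ShortcutAdj (if s = S.u then S.w else s) t := by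
  have hpz : Relation.TransGen S.ShortcutAdj S.p S.z :=
    Relation.TransGen.head (Or.inl S.adj_p_v) (Relation.TransGen.single (Or.inl S.adj_v_z))
  rcases S.adj_graph_cases h with ⟨-, rfl⟩ | ⟨rfl, rfl⟩ | ⟨-, -, hsu, -, -, hst⟩
  · exact absurd rfl ht
  · exact Relation.TransGen.single (Or.inl (by simpa using S.adj_w_afterU))
  rw [if_neg hsu]
  rcases hst with hst | ⟨rfl, -, rfl⟩ | ⟨rfl, -, rfl⟩
  · exact Relation.TransGen.single (Or.inl hst)
  · unfold afterP
    split_ifs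
    exacts [hpz, Relation.TransGen.single (Or.inr ⟨rfl, rfl⟩)]
  · exact Relation.TransGen.head (Or.inl S.adj_q_v) (Relation.TransGen.single (Or.inl S.adj_v_z))

lemma transGen_of_graph_sReaches {s t : ℕ} (h : S.graph.SReaches s t) (ht : t ≠ S.u) :
    Relation.TransGen S.ShortcutAdj (if s = S.u then S.w else s) t := by
  induction h using Relation.TransGen.head_induction_on with
  | single h => exact S.transGen_of_graph_adj h ht
  | head hsc _ ih =>
    rename_i s c _
    by_cases hcu : c = S.u
    · subst hcu
      rw [S.eq_w_of_graph_adj_u hsc, if_neg S.w_ne_u]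
      rwa [if_pos rfl] at ih
    · exact (S.transGen_of_graph_adj hsc hcu).trans (by rwa [if_neg hcu] at ih)

lemma graph_acyclic : S.graph.Acyclic := by
  have key : ∀ x, x ≠ S.u → ¬ S.graph.SReaches x x := fun x hxu hx => by
    have := S.transGen_of_graph_sReaches hx hxu
    rw [if_neg hxu] at this
    exact S.acyclic.sup_arc S.not_reaches x this
  intro x hx
  by_cases hxu : x = S.u
  · subst hxu
    obtain ⟨c, hc, hcu⟩ := Relation.TransGen.head'_iff.1 hx
    have hcu' : c ≠ S.u := fun h => S.w_ne_u (S.eq_w_of_graph_adj_u (h ▸ hc)).symm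
    exact key c hcu' (Relation.TransGen.tail' hcu hc)
  · exact key x hxu hx

lemma cp_spec_of_ne (hp : S.p ≠ S.w) : S.cp ≠ S.v ∧ N.Reaches S.cp S.p := by
  rcases S.cp_spec with ⟨h, -⟩ | ⟨-, h⟩
  exacts [absurd h.symm hp, h]

lemma cq_spec_of_ne (hq : S.q ≠ S.w) : S.cq ≠ S.v ∧ N.Reaches S.cq S.q := by
  rcases S.cq_spec with ⟨h, -⟩ | ⟨-, h⟩
  exacts [absurd h.symm hq, h]

lemma p_ne_w_of_cp_ne_v (h : S.cp ≠ S.v) : S.p ≠ S.w := by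
  rcases S.cp_spec with ⟨-, h'⟩ | ⟨h', -⟩
  exacts [absurd h' h, Ne.symm h']

lemma q_ne_w_of_cq_ne_v (h : S.cq ≠ S.v) : S.q ≠ S.w := by
  rcases S.cq_spec with ⟨-, h'⟩ | ⟨h', -⟩
  exacts [absurd h' h, Ne.symm h']

lemma graph_adj_of_adj {s t : ℕ} (h : N.Adj s t) (hsv : s ≠ S.v) (hsw : s ≠ S.w)
    (htv : t ≠ S.v) : S.graph.Adj s t := by
  have hs := S.ne_u_of_mem (S.supported s t h).1
  have ht := S.ne_u_of_mem (S.supported s t h).2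
  have h' : 0 < N.mult s t := h
  show 0 < S.graph.mult s t
  rw [S.graph_mult_row hsv hsw hs, if_neg (by tauto)]
  omega

lemma graph_adj_w_u : S.graph.Adj S.w S.u := by
  simp [Adj, S.graph_mult_w_left]

lemma graph_adj_u_afterU : S.graph.Adj S.u S.afterU := by
  simp [Adj, S.graph_mult_u_left]

lemma graph_adj_p_afterP (hp : S.p ≠ S.w) : S.graph.Adj S.p S.afterP := by
  have : 0 < (if S.p = S.p ∧ S.p ≠ S.w ∧ S.afterP = S.afterP then 1 else 0) := by simp [hp]
  show 0 < S.graph.mult S.p S.afterP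
  rw [S.graph_mult_row S.p_ne_v hp S.p_ne_u]
  omega

lemma graph_adj_q_z (hq : S.q ≠ S.w) : S.graph.Adj S.q S.z := by
  have : 0 < (if S.q = S.q ∧ S.q ≠ S.w ∧ S.z = S.z then 1 else 0) := by simp [hq]
  show 0 < S.graph.mult S.q S.z
  rw [S.graph_mult_row S.q_ne_v hq S.q_ne_u]
  omega

lemma graph_reaches_of_between {a b : ℕ} (h : N.Reaches a b) (ha : N.SReaches S.w a)
    (hb : N.SReaches b S.v) : S.graph.Reaches a b := by
  induction h using Relation.ReflTransGen.head_induction_on with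
  | refl => exact Relation.ReflTransGen.refl
  | head hac hcb ih =>
    rename_i a c
    have hcv : c ≠ S.v := fun h => S.acyclic S.v (Relation.TransGen.trans_right (h ▸ hcb) hb)
    refine Relation.ReflTransGen.head (S.graph_adj_of_adj hac ?_ ?_ hcv) (ih (ha.tail hac))
    · exact fun h => S.acyclic S.v
        (Relation.TransGen.trans_right (h ▸ Relation.ReflTransGen.head hac hcb) hb)
    · exact fun h => S.acyclic S.w (h ▸ ha)

lemma graph_reaches_cp_p (hp : S.p ≠ S.w) : S.graph.Reaches S.cp S.p :=
  S.graph_reaches_of_between (S.cp_spec_of_ne hp).2 (Relation.TransGen.single S.adj_w_cp)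
    (Relation.TransGen.single S.adj_p_v)

lemma graph_reaches_cq_q (hq : S.q ≠ S.w) : S.graph.Reaches S.cq S.q :=
  S.graph_reaches_of_between (S.cq_spec_of_ne hq).2 (Relation.TransGen.single S.adj_w_cq)
    (Relation.TransGen.single S.adj_q_v)

lemma graph_reaches_afterP_z : S.graph.Reaches S.afterP S.z := by
  unfold afterP
  split_ifs with hq
  · exact Relation.ReflTransGen.refl
  · exact (S.graph_reaches_cq_q hq).tail (S.graph_adj_q_z hq)

lemma graph_reaches_u_z : S.graph.Reaches S.u S.z := by
  refine Relation.ReflTransGen.head S.graph_adj_u_afterU ?_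
  unfold afterU
  split_ifs with hp
  · exact S.graph_reaches_afterP_z
  · exact (S.graph_reaches_cp_p hp).trans
      (Relation.ReflTransGen.head (S.graph_adj_p_afterP hp) S.graph_reaches_afterP_z)

lemma graph_sReaches_w_z : S.graph.SReaches S.w S.z :=
  Relation.TransGen.head' S.graph_adj_w_u S.graph_reaches_u_z

lemma graph_sReaches_p_z : S.graph.SReaches S.p S.z := by
  by_cases hp : S.p = S.w
  · exact hp ▸ S.graph_sReaches_w_z
  · exact Relation.TransGen.head' (S.graph_adj_p_afterP hp) S.graph_reaches_afterP_z

lemma graph_sReaches_q_z : S.graph.SReaches S.q S.z := by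
  by_cases hq : S.q = S.w
  · exact hq ▸ S.graph_sReaches_w_z
  · exact Relation.TransGen.single (S.graph_adj_q_z hq)

lemma graph_reaches_u_cq (hq : S.q ≠ S.w) : S.graph.Reaches S.u S.cq := by
  have hcq : S.afterP = S.cq := if_neg hq
  refine Relation.ReflTransGen.head S.graph_adj_u_afterU ?_
  unfold afterU
  split_ifs with hp
  · rw [hcq]
  · exact (S.graph_reaches_cp_p hp).tail (hcq ▸ S.graph_adj_p_afterP hp)

lemma graph_reaches_u_of_adj_w {t : ℕ} (h : N.Adj S.w t) (htv : t ≠ S.v) :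
    S.graph.Reaches S.u t := by
  rcases S.eq_cp_or_eq_cq_of_adj_w h with rfl | rfl
  · have hcp : S.afterU = S.cp := if_neg (S.p_ne_w_of_cp_ne_v htv)
    exact Relation.ReflTransGen.single (hcp ▸ S.graph_adj_u_afterU)
  · exact S.graph_reaches_u_cq (S.q_ne_w_of_cq_ne_v htv)

lemma graph_sReaches_w_of_adj {t : ℕ} (h : N.Adj S.w t) (htv : t ≠ S.v) :
    S.graph.SReaches S.w t :=
  Relation.TransGen.head' S.graph_adj_w_u (S.graph_reaches_u_of_adj_w h htv)

lemma reaches_z_of_reaches_v {a : ℕ} (h : N.Reaches S.v a) (ha : a ≠ S.v) : N.Reaches S.z a := by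
  rcases Relation.ReflTransGen.cases_head h with rfl | ⟨t, ht, hta⟩
  · exact absurd rfl ha
  · exact S.eq_z_of_adj_v ht ▸ hta

lemma graph_reaches_of_adj {a b : ℕ} (h : N.Adj a b) :
    S.graph.Reaches (if a = S.v then S.z else a) (if b = S.v then S.z else b) := by
  by_cases hav : a = S.v
  · subst hav
    rw [if_pos rfl, if_neg (S.eq_z_of_adj_v h ▸ S.v_ne_z.symm), S.eq_z_of_adj_v h]
    exact Relation.ReflTransGen.refl
  rw [if_neg hav]
  by_cases hbv : b = S.v
  · subst hbv
    rw [if_pos rfl]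
    rcases S.eq_p_or_eq_q_of_adj_v h with rfl | rfl
    exacts [S.graph_sReaches_p_z.to_reflTransGen, S.graph_sReaches_q_z.to_reflTransGen]
  rw [if_neg hbv]
  by_cases haw : a = S.w
  · exact (haw ▸ S.graph_sReaches_w_of_adj (haw ▸ h) hbv).to_reflTransGen
  · exact Relation.ReflTransGen.single (S.graph_adj_of_adj h hav haw hbv)

lemma graph_reaches_of_reaches {a b : ℕ} (h : N.Reaches a b) (ha : a ≠ S.v) (hb : b ≠ S.v) :
    S.graph.Reaches a b := by
  have key : ∀ {a b}, N.Reaches a b →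
      S.graph.Reaches (if a = S.v then S.z else a) (if b = S.v then S.z else b) := by
    intro a b h
    induction h using Relation.ReflTransGen.head_induction_on with
    | refl => exact Relation.ReflTransGen.refl
    | head hac _ ih => exact (S.graph_reaches_of_adj hac).trans ih
  simpa [ha, hb] using key h

lemma graph_sReaches_of_sReaches {a b : ℕ} (h : N.SReaches a b) (ha : a ≠ S.v)
    (hb : b ≠ S.v) : S.graph.SReaches a b := by
  obtain ⟨c, hac, hcb⟩ := Relation.TransGen.head'_iff.1 h
  by_cases hcv : c = S.v
  · subst hcv
    have hzb := S.graph_reaches_of_reaches (S.reaches_z_of_reaches_v hcb hb) S.v_ne_z.symm hb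
    rcases S.eq_p_or_eq_q_of_adj_v hac with rfl | rfl
    exacts [S.graph_sReaches_p_z.trans_left hzb, S.graph_sReaches_q_z.trans_left hzb]
  · by_cases haw : a = S.w
    · subst haw
      exact (S.graph_sReaches_w_of_adj hac hcv).trans_left (S.graph_reaches_of_reaches hcb hcv hb)
    · exact Relation.TransGen.head' (S.graph_adj_of_adj hac ha haw hcv)
        (S.graph_reaches_of_reaches hcb hcv hb)

lemma graph_reaches_u_of_reaches {t a : ℕ} (ht : N.Adj S.w t) (hta : N.Reaches t a)
    (ha : a ≠ S.v) : S.graph.Reaches S.u a := by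
  by_cases htv : t = S.v
  · subst htv
    exact S.graph_reaches_u_z.trans
      (S.graph_reaches_of_reaches (S.reaches_z_of_reaches_v hta ha) S.v_ne_z.symm ha)
  · exact (S.graph_reaches_u_of_adj_w ht htv).trans (S.graph_reaches_of_reaches hta htv ha)

/-- Where the arc from `x` to its child `t` goes in the new graph. -/
def redirect (x t : ℕ) : ℕ := if t = S.v then (if x = S.p then S.afterP else S.z) else t

lemma redirect_v_ne_v (x : ℕ) : S.redirect x S.v ≠ S.v := by
  rw [redirect, if_pos rfl]; split_ifs
  exacts [S.afterP_ne_v, S.v_ne_z.symm]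

lemma redirect_v_ne_u (x : ℕ) : S.redirect x S.v ≠ S.u := by
  rw [redirect, if_pos rfl]; split_ifs
  exacts [S.afterP_ne_u, S.z_ne_u]

lemma graph_mult_eq {x t : ℕ} (hxv : x ≠ S.v) (hxw : x ≠ S.w) (hxu : x ≠ S.u)
    (htv : t ≠ S.v) (htu : t ≠ S.u) :
    S.graph.mult x t = N.mult x t + if t = S.redirect x S.v then N.mult x S.v else 0 := by
  have := S.p_ne_q
  rw [S.graph_mult_row hxv hxw hxu, if_neg (by tauto), S.mult_parent, redirect, if_pos rfl]
  by_cases hxp : x = S.p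
  · subst hxp; split_ifs <;> omega
  · by_cases hxq : x = S.q
    · subst hxq; split_ifs <;> omega
    · simp [hxp, hxq]

lemma mult_v_le_one (x : ℕ) : N.mult x S.v ≤ 1 := by
  have := S.p_ne_q
  rw [S.mult_parent]
  split_ifs <;> omega

lemma graph_adj_redirect {x t : ℕ} (hxv : x ≠ S.v) (hxw : x ≠ S.w) (ht : N.Adj x t) :
    S.graph.Adj x (S.redirect x t) := by
  by_cases htv : t = S.v
  · subst htv
    rcases S.eq_p_or_eq_q_of_adj_v ht with rfl | rfl
    · simpa [redirect] using S.graph_adj_p_afterP hxw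
    · simpa [redirect, S.p_ne_q.symm] using S.graph_adj_q_z hxw
  · simpa [redirect, htv] using S.graph_adj_of_adj ht hxv hxw htv

lemma graph_reaches_redirect {x t a : ℕ} (ht : N.Adj x t) (hta : N.Reaches t a)
    (ha : a ≠ S.v) : S.graph.Reaches (S.redirect x t) a := by
  by_cases htv : t = S.v
  · subst htv
    have hza := S.graph_reaches_of_reaches (S.reaches_z_of_reaches_v hta ha) S.v_ne_z.symm ha
    rw [redirect, if_pos rfl]
    split_ifs
    exacts [S.graph_reaches_afterP_z.trans hza, hza]
  · simpa [redirect, htv] using S.graph_reaches_of_reaches hta htv ha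

/-- The redirected arcs stay distinct: at most one arc from `x` enters `v`, and if it is
redirected onto another child of `x`, that arc becomes parallel. -/
lemma redirect_ne_or_two_le_mult {x t t' : ℕ} (hxv : x ≠ S.v) (hxw : x ≠ S.w)
    (ht : N.Adj x t) (ht' : N.Adj x t') (hne : t ≠ t' ∨ 2 ≤ N.mult x t) :
    S.redirect x t ≠ S.redirect x t' ∨ 2 ≤ S.graph.mult x (S.redirect x t) := by
  have hxu := S.ne_u_of_mem (S.supported x t ht).1
  have htu := S.ne_u_of_mem (S.supported x t ht).2
  have hm := fun {c} => S.graph_mult_eq (t := c) hxv hxw hxu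
  have hv1 := S.mult_v_le_one x
  have h1 : 0 < N.mult x t := ht
  have h1' : 0 < N.mult x t' := ht'
  by_cases htv : t = S.v <;> by_cases ht'v : t' = S.v
  · subst htv; subst ht'v; omega
  · subst htv
    rw [show S.redirect x t' = t' from if_neg ht'v, hm (S.redirect_v_ne_v x)
      (S.redirect_v_ne_u x), if_pos rfl]
    by_cases heq : S.redirect x S.v = t'
    · rw [heq] at *; omega
    · exact Or.inl heq
  · subst ht'v
    rw [show S.redirect x t = t from if_neg htv, hm htv htu]
    by_cases heq : t = S.redirect x S.v
    · rw [if_pos heq]; omega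
    · exact Or.inl heq
  · rw [show S.redirect x t = t from if_neg htv, show S.redirect x t' = t' from if_neg ht'v,
      hm htv htu]
    omega

lemma graph_branchesTo {x a b : ℕ} (h : N.BranchesTo x a b) (hxv : x ≠ S.v) (ha : a ≠ S.v)
    (hb : b ≠ S.v) : S.graph.BranchesTo x a b := by
  obtain ⟨t, t', ht, ht', hne, hta, htb⟩ := h
  by_cases hxw : x = S.w
  · subst hxw
    exact ⟨S.u, S.u, S.graph_adj_w_u, S.graph_adj_w_u, Or.inr (by simp [S.graph_mult_w_left]),
      S.graph_reaches_u_of_reaches ht hta ha, S.graph_reaches_u_of_reaches ht' htb hb⟩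
  exact ⟨_, _, S.graph_adj_redirect hxv hxw ht, S.graph_adj_redirect hxv hxw ht',
    S.redirect_ne_or_two_le_mult hxv hxw ht ht' hne, S.graph_reaches_redirect ht hta ha,
    S.graph_reaches_redirect ht' htb hb⟩

lemma replacesRetic : N.ReplacesRetic S.graph S.v S.u where
  retic := S.retic
  fresh := S.fresh
  verts := rfl
  label := rfl
  inDeg _ hx hxv := S.inDeg_graph hx hxv
  outDeg _ hx hxv := S.outDeg_graph hx hxv
  inDeg_new := S.inDeg_u
  outDeg_new := S.outDeg_u

lemma not_branchesTo_v {a b : ℕ} : ¬ N.BranchesTo S.v a b := by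
  rintro ⟨t, t', ht, ht', hne, -, -⟩
  obtain rfl := S.eq_z_of_adj_v ht
  obtain rfl := S.eq_z_of_adj_v ht'
  simp [S.mult_child] at hne

lemma not_isLeafNode_v : ¬ N.IsLeafNode S.v := fun h => by
  have := S.retic.2.1
  have := h.2.1
  omega

lemma ne_v_of_adj {T : DG} (hT : T.IsMulTree X) {h : ℕ → ℕ} (hh : T.IsNodeEmbedding N h)
    {x y : ℕ} (hxy : T.Adj x y) : h y ≠ S.v := by
  rcases hT.nodes y (hT.supported x y hxy).2 with ⟨-, hy, -⟩ | hy | hy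
  · exact absurd hy (hT.supported.inDeg_pos_of_adj hxy).ne'
  · obtain ⟨c₁, c₂, h₁, h₂, h₁₂⟩ := hT.exists_two_children hy
    exact fun hyv => S.not_branchesTo_v (hyv ▸ hh.branchesTo y c₁ c₂ h₁ h₂ h₁₂)
  · exact fun hyv => S.not_isLeafNode_v (hyv ▸ (hh.leaf y hy).1)

/-- Only the root of `T` can be mapped to `v`; it is moved up to `q`. -/
lemma isNodeEmbedding_graph {T : DG} (hT : T.IsMulTree X) {h : ℕ → ℕ}
    (hh : T.IsNodeEmbedding N h) :
    T.IsNodeEmbedding S.graph fun x => if h x = S.v then S.q else h x where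
  leaf x hx := by
    have hxv : h x ≠ S.v := fun hxv => S.not_isLeafNode_v (hxv ▸ (hh.leaf x hx).1)
    simpa only [if_neg hxv, S.replacesRetic.isLeafNode_iff, S.replacesRetic.label] using
      hh.leaf x hx
  sReaches x y hxy := by
    have hyv := S.ne_v_of_adj hT hh hxy
    simp only [if_neg hyv]
    split_ifs with hxv
    · obtain ⟨c, hc, hcy⟩ := Relation.TransGen.head'_iff.1 (hxv ▸ hh.sReaches x y hxy)
      obtain rfl := S.eq_z_of_adj_v hc
      exact S.graph_sReaches_q_z.trans_left
        (S.graph_reaches_of_reaches hcy S.v_ne_z.symm hyv)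
    · exact S.graph_sReaches_of_sReaches (hh.sReaches x y hxy) hxv hyv
  branchesTo x y y' hy hy' hne := by
    have hb := hh.branchesTo x y y' hy hy' hne
    have hxv : h x ≠ S.v := fun hxv => S.not_branchesTo_v (hxv ▸ hb)
    have hyv := S.ne_v_of_adj hT hh hy
    have hy'v := S.ne_v_of_adj hT hh hy'
    simp only [if_neg hxv, if_neg hyv, if_neg hy'v]
    exact S.graph_branchesTo hb hxv hyv hy'v

lemma graph_displays {T : DG} (hT : T.IsMulTree X) (hd : N.Displays T) : S.graph.Displays T :=
  let ⟨_, hh⟩ := hd.exists_isNodeEmbedding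
  (S.isNodeEmbedding_graph hT hh).displays hT S.graph_supported

lemma v_mem_nonBeadRetics : S.v ∈ N.nonBeadRetics :=
  Finset.mem_filter.2 ⟨S.v_mem, S.retic.2.1, fun s h => by have := S.mult_v_le_one s; omega⟩

lemma two_le_graph_mult {s x : ℕ} (hxv : x ≠ S.v) (h : N.mult s x = 2) :
    2 ≤ S.graph.mult s x := by
  have hxu : x ≠ S.u := S.ne_u_of_mem (S.supported s x (by simp [Adj, h])).2
  by_cases hsv : s = S.v
  · subst hsv; rw [S.mult_child] at h; split_ifs at h; omega
  by_cases hsw : s = S.w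
  · subst hsw; have := S.cp_ne_cq; rw [S.mult_lca] at h; split_ifs at h <;> omega
  by_cases hsu : s = S.u
  · subst hsu; rw [S.supported.mult_eq_zero_left S.fresh] at h; omega
  rw [S.graph_mult_row hsv hsw hsu, if_neg (by tauto)]
  omega

lemma card_nonBeadRetics_graph_lt : S.graph.nonBeadRetics.card < N.nonBeadRetics.card :=
  S.replacesRetic.card_nonBeadRetics_lt S.graph_supported S.v_mem_nonBeadRetics
    ⟨S.w, by rw [S.graph_mult_u_right, if_pos rfl]⟩ fun _ _ => S.two_le_graph_mult

end BeadRelocation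

section Existence

variable {X : Finset ℕ} {N : DG}

lemma IsNetwork.nonempty_beadRelocation (hN : N.IsNetwork X) (h : N.nonBeadRetics.Nonempty) :
    Nonempty N.BeadRelocation := by
  obtain ⟨v, hv⟩ := h
  obtain ⟨hvN, hvin, hnb⟩ := Finset.mem_filter.1 hv
  have hvout : N.outDeg v = 1 := by
    rcases hN.nodes v hvN with ⟨-, h, -⟩ | ⟨-, h, -⟩ | ⟨-, -, h⟩ | ⟨-, h, -⟩ <;> omega
  obtain ⟨p, q, hpq, hpar⟩ := hN.supported.exists_parents_of_inDeg_eq_two hvin hnb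
  have hpv : N.Adj p v := by simp [Adj, hpar]
  have hqv : N.Adj q v := by simp [Adj, hpar]
  obtain ⟨z, -, hz⟩ := exists_adj_of_outDeg_pos (N := N) (x := v) (by omega)
  obtain ⟨w, hw⟩ := hN.exists_isLCA (hN.supported p v hpv).1 (hN.supported q v hqv).1
  obtain ⟨cp, cq, hcp, hcq, hcpq, hcp', hcq', hnr⟩ := hw.exists_children hN.acyclic hpq hpv hqv
  have hwdeg : N.outDeg w = 2 := by
    have := hN.outDeg_le_two (hN.supported w cp hcp).1
    have := hN.supported.two_le_outDeg hcp hcq hcpq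
    omega
  obtain ⟨u, hu⟩ := Infinite.exists_notMem_finset N.verts
  exact ⟨⟨v, p, q, z, w, cp, cq, u, hN.acyclic, hN.supported, ⟨hvN, hvin, hvout⟩, hpar, hpq,
    hN.supported.mult_eq_of_outDeg_eq_one hvout hz,
    hN.supported.mult_eq_of_outDeg_eq_two hwdeg hcp hcq hcpq, hcpq, hcp', hcq', hnr, hu⟩⟩

theorem IsNetwork.exists_isBeadedTree {Ts : Set DG} (hT : ∀ T ∈ Ts, T.IsMulTree X)
    (hN : N.IsNetwork X) (hd : ∀ T ∈ Ts, N.Displays T) :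
    ∃ B : DG, B.IsBeadedTree X ∧ B.reticNum = N.reticNum ∧ ∀ T ∈ Ts, B.Displays T := by
  induction hn : N.nonBeadRetics.card using Nat.strong_induction_on generalizing N with
  | _ n ih =>
    rcases N.nonBeadRetics.eq_empty_or_nonempty with h | h
    · exact ⟨N, hN.isBeadedTree_of_nonBeadRetics_eq_empty h, rfl, hd⟩
    obtain ⟨S⟩ := hN.nonempty_beadRelocation h
    obtain ⟨B, hB, hk, hBd⟩ := ih _ (hn ▸ S.card_nonBeadRetics_graph_lt)
      (S.replacesRetic.isNetwork hN S.graph_acyclic S.graph_supported)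
      (fun T hT' => S.graph_displays (hT T hT') (hd T hT')) rfl
    exact ⟨B, hB, hk.trans S.replacesRetic.reticNum_eq, hBd⟩

end Existence

end DG

/-- Lemma 2: there is a phylogenetic network on `X` with `k`
reticulations weakly displaying every MUL-tree in `𝒯` iff there is a beaded
tree on `X` with `k` reticulations weakly displaying every MUL-tree in `𝒯`. -/
theorem network_iff_beaded_tree (X : Finset ℕ) (Ts : Set DG)
    (hT : ∀ T ∈ Ts, DG.IsMulTree X T) (k : ℕ) :
    (∃ N : DG, DG.IsNetwork X N ∧ N.reticNum = k ∧ ∀ T ∈ Ts, N.Displays T) ↔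
    (∃ B : DG, DG.IsBeadedTree X B ∧ B.reticNum = k ∧ ∀ T ∈ Ts, B.Displays T) := by
  constructor
  · rintro ⟨N, hN, rfl, hd⟩
    exact hN.exists_isBeadedTree hT hd
  · rintro ⟨B, hB, hk, hd⟩
    exact ⟨B, hB.1, hk, hd⟩
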